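/- Suppose P* = (P*¹, …, P*^{K+1}) maximizes the throughput Σ_{i=1}^{K+1} lⁱ · g(Pⁱ) over the feasible set of the single-sequence energy-harvesting problem. Then there exist Lagrange multipliers ξ₁, …, ξ_{K+1} ≥ 0 satisfying the complementary slackness conditions ξ_k · ( Σ_{i=1}^k P*ⁱ lⁱ − Σ_{j=0}^{k−1} Eʲ ) = 0 for every k = 1, …, K+1, such that for every i = 1, …, K+1, with Aᵢ = Σ_{k=i}^{K+1} ξ_k one has Aᵢ > 0 and P*ⁱ = max{0, 1/(2Aᵢ) − 1/K₀}. -/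
import Mathlib


/-- `g(x) = (1/2) log(1 + K₀ x)` (natural logarithm). -/
noncomputable def gfun (K0 x : ℝ) : ℝ := Real.log (1 + K0 * x) / 2

/-- Feasibility in the single-sequence energy-harvesting problem:
`P i` is the power used in epoch `i` (epochs are `1, …, K+1`, epoch `i`
covering `(t^{i-1}, t^i]` of length `lⁱ = tⁱ − t^{i-1}`), `E j` arrives at
time `t^j` for `j = 0, …, K`; the powers are nonnegative and satisfy the
energy causality constraints. -/
def SFeas (K : ℕ) (t E P : ℕ → ℝ) : Prop :=
  (∀ i, 1 ≤ i → i ≤ K + 1 → 0 ≤ P i) ∧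
  (∀ k, 1 ≤ k → k ≤ K + 1 →
    ∑ i ∈ Finset.Icc 1 k, P i * (t i - t (i - 1)) ≤ ∑ j ∈ Finset.range k, E j)

/-- The throughput `Σ_{i=1}^{K+1} lⁱ g(Pⁱ)`. -/
noncomputable def SThroughput (K0 : ℝ) (K : ℕ) (t P : ℕ → ℝ) : ℝ :=
  ∑ i ∈ Finset.Icc 1 (K + 1), (t i - t (i - 1)) * gfun K0 (P i)

lemma sum_diff_pair {f g : ℕ → ℝ} (s : Finset ℕ) (i j : ℕ) (hij : i ≠ j)
    (h : ∀ x ∈ s, x ≠ i → x ≠ j → f x = g x) :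
    ∑ x ∈ s, f x = ∑ x ∈ s, g x
      + ((if i ∈ s then f i - g i else 0) + (if j ∈ s then f j - g j else 0)) := by
  have key : ∀ x ∈ s, f x = g x + ((if x = i then f i - g i else 0)
      + (if x = j then f j - g j else 0)) := by
    intro x hx
    by_cases hxi : x = i
    · subst hxi; simp [hij.symm ∘ Eq.symm, hij]
    · by_cases hxj : x = j
      · subst hxj; simp [hxi]
      · simp [hxi, hxj, h x hx hxi hxj]
  rw [Finset.sum_congr rfl key, Finset.sum_add_distrib, Finset.sum_add_distrib,
    Finset.sum_ite_eq', Finset.sum_ite_eq']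

lemma tele (f : ℕ → ℝ) (n : ℕ) : ∀ i, i ≤ n + 1 →
    ∑ k ∈ Finset.Icc i n, (f k - f (k+1)) = f i - f (n+1) := by
  induction n with
  | zero => intro i hi; interval_cases i <;> simp
  | succ n ih =>
    intro i hi
    rcases Nat.lt_or_ge i (n+2) with h | h
    · have h' : i ≤ n + 1 := by omega
      rw [Finset.sum_Icc_succ_top h', ih i h']
      ring
    · have : i = n + 2 := by omega
      subst this
      simp

lemma gfun_le (K0 x h : ℝ) (hK0 : 0 < K0) (hx : 0 ≤ x) (hh : 0 ≤ h) :
    gfun K0 (x+h) - gfun K0 x ≤ h * K0 / (2*(1+K0*x)) := by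
  have hv : (0:ℝ) < 1 + K0 * x := by nlinarith
  have hu : (0:ℝ) < 1 + K0 * (x + h) := by nlinarith
  have hlog : Real.log ((1+K0*(x+h))/(1+K0*x)) ≤ (1+K0*(x+h))/(1+K0*x) - 1 :=
    Real.log_le_sub_one_of_pos (div_pos hu hv)
  rw [Real.log_div hu.ne' hv.ne'] at hlog
  unfold gfun
  rw [div_sub_div_same]
  have heq : (1+K0*(x+h))/(1+K0*x) - 1 = h * K0 / (1+K0*x) := by
    field_simp; ring
  rw [heq] at hlog
  rw [div_le_div_iff₀ two_pos (by positivity)]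
  calc (Real.log (1 + K0 * (x + h)) - Real.log (1 + K0 * x)) * (2 * (1 + K0 * x))
      ≤ (h * K0 / (1+K0*x)) * (2 * (1 + K0 * x)) := by
        apply mul_le_mul_of_nonneg_right hlog (by positivity)
    _ = h * K0 * 2 := by field_simp

lemma gfun_ge (K0 x h : ℝ) (hK0 : 0 < K0) (hx : 0 ≤ x) (hh : 0 ≤ h) :
    h * K0 / (2*(1+K0*(x+h))) ≤ gfun K0 (x+h) - gfun K0 x := by
  have hv : (0:ℝ) < 1 + K0 * x := by nlinarith
  have hu : (0:ℝ) < 1 + K0 * (x + h) := by nlinarith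
  have hlog : Real.log ((1+K0*x)/(1+K0*(x+h))) ≤ (1+K0*x)/(1+K0*(x+h)) - 1 :=
    Real.log_le_sub_one_of_pos (div_pos hv hu)
  rw [Real.log_div hv.ne' hu.ne'] at hlog
  unfold gfun
  rw [div_sub_div_same]
  have heq : (1+K0*x)/(1+K0*(x+h)) - 1 = -(h * K0) / (1+K0*(x+h)) := by
    field_simp; ring
  rw [heq] at hlog
  rw [div_le_div_iff₀ (by positivity) two_pos]
  nlinarith [mul_le_mul_of_nonneg_right hlog hu.le,
    div_mul_cancel₀ (-(h*K0)) hu.ne']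

lemma gfun_lt (K0 x y : ℝ) (hK0 : 0 < K0) (hx : 0 ≤ x) (hxy : x < y) :
    gfun K0 x < gfun K0 y := by
  unfold gfun
  have : (0:ℝ) < 1 + K0 * x := by nlinarith
  have hlog := Real.log_lt_log this (by nlinarith : 1 + K0 * x < 1 + K0 * y)
  linarith

lemma mono_of_opt (K0 : ℝ) (hK0 : 0 < K0) (K : ℕ) (t E Pstar : ℕ → ℝ)
    (hl : ∀ i, 1 ≤ i → i ≤ K + 1 → 0 < t i - t (i - 1))
    (hfeas : SFeas K t E Pstar)
    (hopt : ∀ Q : ℕ → ℝ, SFeas K t E Q →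
      SThroughput K0 K t Q ≤ SThroughput K0 K t Pstar) :
    ∀ k, 1 ≤ k → k ≤ K → Pstar k ≤ Pstar (k + 1) := by
  intro k hk1 hkK
  by_contra hcon
  push_neg at hcon
  set l1 := t k - t (k - 1) with hl1def
  set l2 := t (k+1) - t (k + 1 - 1) with hl2def
  have hl1 : 0 < l1 := hl (k) hk1 (by omega)
  have hl2 : 0 < l2 := hl (k+1) (by omega) (by omega)
  have hPk1 : 0 ≤ Pstar (k+1) := hfeas.1 (k+1) (by omega) (by omega)
  set d := Pstar k - Pstar (k+1) with hddef
  have hd : 0 < d := by simp [hddef]; linarith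
  set ε := d * min l1 l2 / 4 with hedef
  have hε : 0 < ε := by positivity
  set a := ε / l1 with hadef
  set b := ε / l2 with hbdef
  have ha : 0 < a := by positivity
  have hb : 0 < b := by positivity
  have hal : a * l1 = ε := div_mul_cancel₀ ε hl1.ne'
  have hbl : b * l2 = ε := div_mul_cancel₀ ε hl2.ne'
  have ha4 : a ≤ d / 4 := by
    rw [hadef, div_le_div_iff₀ hl1 (by norm_num : (0:ℝ) < 4)]
    have : min l1 l2 ≤ l1 := min_le_left _ _
    rw [hedef]; nlinarith
  have hb4 : b ≤ d / 4 := by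
    rw [hbdef, div_le_div_iff₀ hl2 (by norm_num : (0:ℝ) < 4)]
    have : min l1 l2 ≤ l2 := min_le_right _ _
    rw [hedef]; nlinarith
  set Q : ℕ → ℝ := fun i => if i = k then Pstar k - a
    else if i = k+1 then Pstar (k+1) + b else Pstar i with hQdef
  have hQk : Q k = Pstar k - a := by simp [hQdef]
  have hQk1 : Q (k+1) = Pstar (k+1) + b := by simp [hQdef]
  have hQo : ∀ x, x ≠ k → x ≠ k+1 → Q x = Pstar x := by
    intro x h1 h2; simp [hQdef, h1, h2]
  have hkne : k ≠ k + 1 := by omega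
  have hQfeas : SFeas K t E Q := by
    constructor
    · intro i h1 h2
      by_cases hik : i = k
      · subst hik; rw [hQk]; linarith
      · by_cases hik1 : i = k+1
        · subst hik1; rw [hQk1]; linarith
        · rw [hQo i hik hik1]; exact hfeas.1 i h1 h2
    · intro m h1 h2
      have hsum := sum_diff_pair (f := fun i => Q i * (t i - t (i - 1)))
        (g := fun i => Pstar i * (t i - t (i - 1))) (Finset.Icc 1 m) k (k+1) hkne
        (by intro x _ hx1 hx2; rw [hQo x hx1 hx2])
      rw [hQk, hQk1] at hsum
      have e1 : (Pstar k - a) * (t k - t (k - 1)) - Pstar k * (t k - t (k - 1)) = -ε := by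
        rw [← hal]; rw [hl1def]; ring
      have e2 : (Pstar (k+1) + b) * (t (k+1) - t (k + 1 - 1))
          - Pstar (k+1) * (t (k+1) - t (k + 1 - 1)) = ε := by
        rw [← hbl]; rw [hl2def]; ring
      rw [e1, e2] at hsum
      have hbase := hfeas.2 m h1 h2
      rw [hsum]
      by_cases hmem1 : k + 1 ∈ Finset.Icc 1 m
      · have hmem : k ∈ Finset.Icc 1 m := by
          simp only [Finset.mem_Icc] at *; omega
        rw [if_pos hmem, if_pos hmem1]; linarith
      · rw [if_neg hmem1]
        by_cases hmem : k ∈ Finset.Icc 1 m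
        · rw [if_pos hmem]; linarith
        · rw [if_neg hmem]; linarith
  have hTP := hopt Q hQfeas
  -- throughput strictly increases: contradiction
  have hsum := sum_diff_pair (f := fun i => (t i - t (i - 1)) * gfun K0 (Q i))
    (g := fun i => (t i - t (i - 1)) * gfun K0 (Pstar i)) (Finset.Icc 1 (K+1)) k (k+1) hkne
    (by intro x _ hx1 hx2; rw [hQo x hx1 hx2])
  have hmemk : k ∈ Finset.Icc 1 (K+1) := by simp only [Finset.mem_Icc]; omega
  have hmemk1 : k + 1 ∈ Finset.Icc 1 (K+1) := by simp only [Finset.mem_Icc]; omega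
  rw [if_pos hmemk, if_pos hmemk1, hQk, hQk1] at hsum
  have hxnn : 0 ≤ Pstar k - a := by linarith
  have hup : gfun K0 (Pstar k) - gfun K0 (Pstar k - a) ≤ a * K0 / (2*(1+K0*(Pstar k - a))) := by
    have := gfun_le K0 (Pstar k - a) a hK0 hxnn ha.le
    have heq : Pstar k - a + a = Pstar k := by ring
    rwa [heq] at this
  have hlo : b * K0 / (2*(1+K0*(Pstar (k+1) + b))) ≤
      gfun K0 (Pstar (k+1) + b) - gfun K0 (Pstar (k+1)) :=
    gfun_ge K0 (Pstar (k+1)) b hK0 hPk1 hb.le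
  have hu : (0:ℝ) < 1 + K0 * (Pstar (k+1) + b) := by
    have := mul_pos hK0 (show (0:ℝ) < Pstar (k+1) + b by linarith)
    linarith
  have hw : (0:ℝ) < 1 + K0 * (Pstar k - a) := by
    have := mul_nonneg hK0.le hxnn
    linarith
  have hlt : Pstar (k+1) + b < Pstar k - a := by
    have h4 : d = Pstar k - Pstar (k+1) := hddef
    linarith
  have hkey : ε * K0 / (2*(1+K0*(Pstar k - a))) < ε * K0 / (2*(1+K0*(Pstar (k+1) + b))) := by
    apply div_lt_div_of_pos_left (by positivity) (by positivity)
    have := mul_lt_mul_of_pos_left hlt hK0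
    linarith
  have h1 : l1 * gfun K0 (Pstar k) - l1 * gfun K0 (Pstar k - a)
      ≤ ε * K0 / (2*(1+K0*(Pstar k - a))) := by
    calc l1 * gfun K0 (Pstar k) - l1 * gfun K0 (Pstar k - a)
        = l1 * (gfun K0 (Pstar k) - gfun K0 (Pstar k - a)) := by ring
      _ ≤ l1 * (a * K0 / (2*(1+K0*(Pstar k - a)))) :=
          mul_le_mul_of_nonneg_left hup hl1.le
      _ = ε * K0 / (2*(1+K0*(Pstar k - a))) := by rw [← hal]; ring
  have h2 : ε * K0 / (2*(1+K0*(Pstar (k+1) + b)))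
      ≤ l2 * gfun K0 (Pstar (k+1) + b) - l2 * gfun K0 (Pstar (k+1)) := by
    calc ε * K0 / (2*(1+K0*(Pstar (k+1) + b)))
        = l2 * (b * K0 / (2*(1+K0*(Pstar (k+1) + b)))) := by rw [← hbl]; ring
      _ ≤ l2 * (gfun K0 (Pstar (k+1) + b) - gfun K0 (Pstar (k+1))) :=
          mul_le_mul_of_nonneg_left hlo hl2.le
      _ = l2 * gfun K0 (Pstar (k+1) + b) - l2 * gfun K0 (Pstar (k+1)) := by ring
  clear_value Q a b ε d l1 l2
  have hdelta : 0 < l1 * gfun K0 (Pstar k - a) - l1 * gfun K0 (Pstar k)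
      + (l2 * gfun K0 (Pstar (k+1) + b) - l2 * gfun K0 (Pstar (k+1))) := by linarith
  have hgain : SThroughput K0 K t Pstar < SThroughput K0 K t Q := by
    unfold SThroughput
    rw [hsum, ← hl1def, ← hl2def]
    linarith [hdelta]
  linarith

lemma slack_of_opt (K0 : ℝ) (hK0 : 0 < K0) (K : ℕ) (t E Pstar : ℕ → ℝ)
    (hl : ∀ i, 1 ≤ i → i ≤ K + 1 → 0 < t i - t (i - 1))
    (hfeas : SFeas K t E Pstar)
    (hopt : ∀ Q : ℕ → ℝ, SFeas K t E Q →
      SThroughput K0 K t Q ≤ SThroughput K0 K t Pstar) :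
    ∀ k, 1 ≤ k → k ≤ K →
      (∑ i ∈ Finset.Icc 1 k, Pstar i * (t i - t (i - 1))) < ∑ j ∈ Finset.range k, E j →
      Pstar (k + 1) ≤ Pstar k := by
  intro k hk1 hkK hslack
  by_contra hcon
  push_neg at hcon
  set l1 := t k - t (k - 1) with hl1def
  set l2 := t (k+1) - t (k + 1 - 1) with hl2def
  have hl1 : 0 < l1 := hl (k) hk1 (by omega)
  have hl2 : 0 < l2 := hl (k+1) (by omega) (by omega)
  have hPk : 0 ≤ Pstar k := hfeas.1 k hk1 (by omega)
  set s := (∑ j ∈ Finset.range k, E j) - ∑ i ∈ Finset.Icc 1 k, Pstar i * (t i - t (i - 1))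
    with hsdef
  have hs : 0 < s := by simp only [hsdef]; linarith
  set d := Pstar (k+1) - Pstar k with hddef
  have hd : 0 < d := by simp only [hddef]; linarith
  set ε := min s (d * min l1 l2 / 4) with hedef
  have hε : 0 < ε := lt_min hs (by positivity)
  have hεs : ε ≤ s := min_le_left _ _
  set a := ε / l1 with hadef
  set b := ε / l2 with hbdef
  have ha : 0 < a := by positivity
  have hb : 0 < b := by positivity
  have hal : a * l1 = ε := div_mul_cancel₀ ε hl1.ne'
  have hbl : b * l2 = ε := div_mul_cancel₀ ε hl2.ne'
  have ha4 : a ≤ d / 4 := by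
    rw [hadef, div_le_div_iff₀ hl1 (by norm_num : (0:ℝ) < 4)]
    have h5 : ε ≤ d * min l1 l2 / 4 := min_le_right _ _
    have h6 : min l1 l2 ≤ l1 := min_le_left _ _
    nlinarith
  have hb4 : b ≤ d / 4 := by
    rw [hbdef, div_le_div_iff₀ hl2 (by norm_num : (0:ℝ) < 4)]
    have h5 : ε ≤ d * min l1 l2 / 4 := min_le_right _ _
    have h6 : min l1 l2 ≤ l2 := min_le_right _ _
    nlinarith
  set Q : ℕ → ℝ := fun i => if i = k then Pstar k + a
    else if i = k+1 then Pstar (k+1) - b else Pstar i with hQdef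
  have hQk : Q k = Pstar k + a := by simp [hQdef]
  have hQk1 : Q (k+1) = Pstar (k+1) - b := by simp [hQdef]
  have hQo : ∀ x, x ≠ k → x ≠ k+1 → Q x = Pstar x := by
    intro x h1 h2; simp [hQdef, h1, h2]
  have hkne : k ≠ k + 1 := by omega
  have hQfeas : SFeas K t E Q := by
    constructor
    · intro i h1 h2
      by_cases hik : i = k
      · subst hik; rw [hQk]; linarith
      · by_cases hik1 : i = k+1
        · subst hik1; rw [hQk1]
          have h4 : d = Pstar (k+1) - Pstar k := hddef
          linarith
        · rw [hQo i hik hik1]; exact hfeas.1 i h1 h2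
    · intro m h1 h2
      have hsum := sum_diff_pair (f := fun i => Q i * (t i - t (i - 1)))
        (g := fun i => Pstar i * (t i - t (i - 1))) (Finset.Icc 1 m) k (k+1) hkne
        (by intro x _ hx1 hx2; rw [hQo x hx1 hx2])
      rw [hQk, hQk1] at hsum
      have e1 : (Pstar k + a) * (t k - t (k - 1)) - Pstar k * (t k - t (k - 1)) = ε := by
        rw [← hal]; rw [hl1def]; ring
      have e2 : (Pstar (k+1) - b) * (t (k+1) - t (k + 1 - 1))
          - Pstar (k+1) * (t (k+1) - t (k + 1 - 1)) = -ε := by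
        rw [← hbl]; rw [hl2def]; ring
      rw [e1, e2] at hsum
      have hbase := hfeas.2 m h1 h2
      rw [hsum]
      by_cases hmem1 : k + 1 ∈ Finset.Icc 1 m
      · have hmem : k ∈ Finset.Icc 1 m := by
          simp only [Finset.mem_Icc] at *; omega
        rw [if_pos hmem, if_pos hmem1]; linarith
      · rw [if_neg hmem1]
        by_cases hmem : k ∈ Finset.Icc 1 m
        · rw [if_pos hmem]
          have hmk : m = k := by
            simp only [Finset.mem_Icc] at hmem hmem1; omega
          subst hmk
          have h7 : s = (∑ j ∈ Finset.range m, E j)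
              - ∑ i ∈ Finset.Icc 1 m, Pstar i * (t i - t (i - 1)) := hsdef
          linarith
        · rw [if_neg hmem]; linarith
  have hTP := hopt Q hQfeas
  have hsum := sum_diff_pair (f := fun i => (t i - t (i - 1)) * gfun K0 (Q i))
    (g := fun i => (t i - t (i - 1)) * gfun K0 (Pstar i)) (Finset.Icc 1 (K+1)) k (k+1) hkne
    (by intro x _ hx1 hx2; rw [hQo x hx1 hx2])
  have hmemk : k ∈ Finset.Icc 1 (K+1) := by simp only [Finset.mem_Icc]; omega
  have hmemk1 : k + 1 ∈ Finset.Icc 1 (K+1) := by simp only [Finset.mem_Icc]; omega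
  rw [if_pos hmemk, if_pos hmemk1, hQk, hQk1] at hsum
  have hynn : 0 ≤ Pstar (k+1) - b := by
    have h4 : d = Pstar (k+1) - Pstar k := hddef
    linarith
  have hlo : a * K0 / (2*(1+K0*(Pstar k + a))) ≤ gfun K0 (Pstar k + a) - gfun K0 (Pstar k) :=
    gfun_ge K0 (Pstar k) a hK0 hPk ha.le
  have hup : gfun K0 (Pstar (k+1)) - gfun K0 (Pstar (k+1) - b)
      ≤ b * K0 / (2*(1+K0*(Pstar (k+1) - b))) := by
    have h5 := gfun_le K0 (Pstar (k+1) - b) b hK0 hynn hb.le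
    have heq : Pstar (k+1) - b + b = Pstar (k+1) := by ring
    rwa [heq] at h5
  have hlt : Pstar k + a < Pstar (k+1) - b := by
    have h4 : d = Pstar (k+1) - Pstar k := hddef
    linarith
  have hu : (0:ℝ) < 1 + K0 * (Pstar k + a) := by
    have := mul_pos hK0 (show (0:ℝ) < Pstar k + a by linarith)
    linarith
  have hw : (0:ℝ) < 1 + K0 * (Pstar (k+1) - b) := by
    have := mul_nonneg hK0.le hynn
    linarith
  have hkey : ε * K0 / (2*(1+K0*(Pstar (k+1) - b))) < ε * K0 / (2*(1+K0*(Pstar k + a))) := by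
    apply div_lt_div_of_pos_left (by positivity) (by positivity)
    have := mul_lt_mul_of_pos_left hlt hK0
    linarith
  have h1 : ε * K0 / (2*(1+K0*(Pstar k + a)))
      ≤ l1 * gfun K0 (Pstar k + a) - l1 * gfun K0 (Pstar k) := by
    calc ε * K0 / (2*(1+K0*(Pstar k + a)))
        = l1 * (a * K0 / (2*(1+K0*(Pstar k + a)))) := by rw [← hal]; ring
      _ ≤ l1 * (gfun K0 (Pstar k + a) - gfun K0 (Pstar k)) :=
          mul_le_mul_of_nonneg_left hlo hl1.le
      _ = l1 * gfun K0 (Pstar k + a) - l1 * gfun K0 (Pstar k) := by ring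
  have h2 : l2 * gfun K0 (Pstar (k+1)) - l2 * gfun K0 (Pstar (k+1) - b)
      ≤ ε * K0 / (2*(1+K0*(Pstar (k+1) - b))) := by
    calc l2 * gfun K0 (Pstar (k+1)) - l2 * gfun K0 (Pstar (k+1) - b)
        = l2 * (gfun K0 (Pstar (k+1)) - gfun K0 (Pstar (k+1) - b)) := by ring
      _ ≤ l2 * (b * K0 / (2*(1+K0*(Pstar (k+1) - b)))) :=
          mul_le_mul_of_nonneg_left hup hl2.le
      _ = ε * K0 / (2*(1+K0*(Pstar (k+1) - b))) := by rw [← hbl]; ring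
  clear_value Q a b ε d s l1 l2
  have hdelta : 0 < l1 * gfun K0 (Pstar k + a) - l1 * gfun K0 (Pstar k)
      + (l2 * gfun K0 (Pstar (k+1) - b) - l2 * gfun K0 (Pstar (k+1))) := by linarith
  have hgain : SThroughput K0 K t Pstar < SThroughput K0 K t Q := by
    unfold SThroughput
    rw [hsum, ← hl1def, ← hl2def]
    linarith [hdelta]
  linarith

lemma last_tight (K0 : ℝ) (hK0 : 0 < K0) (K : ℕ) (t E Pstar : ℕ → ℝ)
    (hl : ∀ i, 1 ≤ i → i ≤ K + 1 → 0 < t i - t (i - 1))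
    (hfeas : SFeas K t E Pstar)
    (hopt : ∀ Q : ℕ → ℝ, SFeas K t E Q →
      SThroughput K0 K t Q ≤ SThroughput K0 K t Pstar) :
    ∑ i ∈ Finset.Icc 1 (K+1), Pstar i * (t i - t (i - 1))
      = ∑ j ∈ Finset.range (K+1), E j := by
  refine le_antisymm (hfeas.2 (K+1) (by omega) le_rfl) ?_
  by_contra hcon
  push_neg at hcon
  set lK := t (K+1) - t (K + 1 - 1) with hlKdef
  have hlK : 0 < lK := hl (K+1) (by omega) le_rfl
  set s := (∑ j ∈ Finset.range (K+1), E j)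
    - ∑ i ∈ Finset.Icc 1 (K+1), Pstar i * (t i - t (i - 1)) with hsdef
  have hs : 0 < s := by simp only [hsdef]; linarith
  set ε := s / lK with hedef
  have hε : 0 < ε := by positivity
  have hel : ε * lK = s := div_mul_cancel₀ s hlK.ne'
  have hPK : 0 ≤ Pstar (K+1) := hfeas.1 (K+1) (by omega) le_rfl
  set Q : ℕ → ℝ := fun i => if i = K+1 then Pstar (K+1) + ε else Pstar i with hQdef
  have hQK : Q (K+1) = Pstar (K+1) + ε := by simp [hQdef]
  have hQo : ∀ x, x ≠ K+1 → Q x = Pstar x := by intro x h1; simp [hQdef, h1]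
  have hne : K + 1 ≠ K + 2 := by omega
  have hQfeas : SFeas K t E Q := by
    constructor
    · intro i h1 h2
      by_cases hik : i = K+1
      · subst hik; rw [hQK]; linarith
      · rw [hQo i hik]; exact hfeas.1 i h1 h2
    · intro m h1 h2
      have hsum := sum_diff_pair (f := fun i => Q i * (t i - t (i - 1)))
        (g := fun i => Pstar i * (t i - t (i - 1))) (Finset.Icc 1 m) (K+1) (K+2) hne
        (by intro x _ hx1 _; rw [hQo x hx1])
      rw [hQK, hQo (K+2) (by omega)] at hsum
      have e2 : Pstar (K+2) * (t (K+2) - t (K + 2 - 1))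
          - Pstar (K+2) * (t (K+2) - t (K + 2 - 1)) = 0 := by ring
      have e1 : (Pstar (K+1) + ε) * (t (K+1) - t (K + 1 - 1))
          - Pstar (K+1) * (t (K+1) - t (K + 1 - 1)) = s := by
        rw [← hel]; rw [hlKdef]; ring
      rw [e1, e2, ite_self] at hsum
      have hbase := hfeas.2 m h1 h2
      rw [hsum]
      by_cases hmem : K + 1 ∈ Finset.Icc 1 m
      · have hm : m = K + 1 := by simp only [Finset.mem_Icc] at hmem; omega
        subst hm
        rw [if_pos hmem]
        have h7 : s = (∑ j ∈ Finset.range (K+1), E j)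
            - ∑ i ∈ Finset.Icc 1 (K+1), Pstar i * (t i - t (i - 1)) := hsdef
        linarith
      · rw [if_neg hmem]; linarith
  have hTP := hopt Q hQfeas
  have hsum := sum_diff_pair (f := fun i => (t i - t (i - 1)) * gfun K0 (Q i))
    (g := fun i => (t i - t (i - 1)) * gfun K0 (Pstar i)) (Finset.Icc 1 (K+1)) (K+1) (K+2) hne
    (by intro x _ hx1 _; rw [hQo x hx1])
  have hmemK : K + 1 ∈ Finset.Icc 1 (K+1) := by simp only [Finset.mem_Icc]; omega
  have hmemK2 : K + 2 ∉ Finset.Icc 1 (K+1) := by simp only [Finset.mem_Icc]; omega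
  rw [if_pos hmemK, if_neg hmemK2, hQK] at hsum
  have hglt : gfun K0 (Pstar (K+1)) < gfun K0 (Pstar (K+1) + ε) :=
    gfun_lt K0 _ _ hK0 hPK (by linarith)
  have hterm : 0 < lK * gfun K0 (Pstar (K+1) + ε) - lK * gfun K0 (Pstar (K+1)) := by
    have := mul_lt_mul_of_pos_left hglt hlK
    linarith
  clear_value Q ε s lK
  have hgain : SThroughput K0 K t Pstar < SThroughput K0 K t Q := by
    unfold SThroughput
    rw [hsum, ← hlKdef]
    linarith [hterm]
  linarith

/-- KKT / water-filling characterization (equation (38) of the paper) for the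
single-sequence energy-harvesting problem: a throughput maximizer `P*` admits
nonnegative Lagrange multipliers `ξ₁, …, ξ_{K+1}` satisfying complementary
slackness such that, with `Aᵢ = Σ_{k=i}^{K+1} ξ_k`, one has `Aᵢ > 0` and
`P*ⁱ = max{0, 1/(2Aᵢ) − 1/K₀}` for every epoch `i`. -/
theorem waterfilling_KKT (K0 : ℝ) (hK0 : 0 < K0) (K : ℕ) (t : ℕ → ℝ)
    (ht0 : t 0 = 0) (htmono : ∀ i, i ≤ K → t i < t (i + 1))
    (E : ℕ → ℝ) (hE0 : 0 < E 0) (hE : ∀ j, 1 ≤ j → j ≤ K → 0 ≤ E j)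
    (Pstar : ℕ → ℝ) (hfeas : SFeas K t E Pstar)
    (hopt : ∀ Q : ℕ → ℝ, SFeas K t E Q →
      SThroughput K0 K t Q ≤ SThroughput K0 K t Pstar) :
    ∃ ξ : ℕ → ℝ,
      (∀ k, 1 ≤ k → k ≤ K + 1 → 0 ≤ ξ k) ∧
      (∀ k, 1 ≤ k → k ≤ K + 1 →
        ξ k * (∑ i ∈ Finset.Icc 1 k, Pstar i * (t i - t (i - 1))
          - ∑ j ∈ Finset.range k, E j) = 0) ∧
      (∀ i, 1 ≤ i → i ≤ K + 1 →
        0 < (∑ k ∈ Finset.Icc i (K + 1), ξ k) ∧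
        Pstar i = max 0 (1 / (2 * ∑ k ∈ Finset.Icc i (K + 1), ξ k) - 1 / K0)) := by
  have hl : ∀ i, 1 ≤ i → i ≤ K + 1 → 0 < t i - t (i - 1) := by
    intro i h1 h2
    have h3 := htmono (i-1) (by omega)
    have h4 : i - 1 + 1 = i := by omega
    rw [h4] at h3
    linarith
  have hmono := mono_of_opt K0 hK0 K t E Pstar hl hfeas hopt
  have hslackl := slack_of_opt K0 hK0 K t E Pstar hl hfeas hopt
  have hlast := last_tight K0 hK0 K t E Pstar hl hfeas hopt
  have hPnn := hfeas.1
  have hden : ∀ i, 1 ≤ i → i ≤ K + 1 → 0 < 1 + K0 * Pstar i := by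
    intro i h1 h2
    have := mul_nonneg hK0.le (hPnn i h1 h2)
    linarith
  set A : ℕ → ℝ := fun i => if i ≤ K + 1 then K0 / (2 * (1 + K0 * Pstar i)) else 0
    with hAdef
  have hAval : ∀ i, i ≤ K + 1 → A i = K0 / (2 * (1 + K0 * Pstar i)) := by
    intro i h; simp [hAdef, h]
  have hAtop : A (K + 2) = 0 := by
    simp only [hAdef]; rw [if_neg (by omega)]
  have hApos : ∀ i, 1 ≤ i → i ≤ K + 1 → 0 < A i := by
    intro i h1 h2
    rw [hAval i h2]
    exact div_pos hK0 (by linarith [hden i h1 h2])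
  have hsumA : ∀ i, 1 ≤ i → i ≤ K + 1 →
      ∑ k ∈ Finset.Icc i (K + 1), (A k - A (k + 1)) = A i := by
    intro i h1 h2
    rw [tele A (K + 1) i (by omega), hAtop, sub_zero]
  refine ⟨fun k => A k - A (k + 1), ?_, ?_, ?_⟩
  · intro k h1 h2
    beta_reduce
    rcases Nat.lt_or_ge k (K + 1) with hkK | hkK
    · have h3 := hmono k h1 (by omega)
      rw [hAval k h2, hAval (k + 1) (by omega), sub_nonneg]
      apply div_le_div_of_nonneg_left hK0.le (by linarith [hden k h1 h2])
      have := mul_le_mul_of_nonneg_left h3 hK0.le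
      linarith
    · have hk : k = K + 1 := by omega
      subst hk
      rw [hAtop, sub_zero]
      exact (hApos (K + 1) h1 h2).le
  · intro k h1 h2
    beta_reduce
    rcases Nat.lt_or_ge k (K + 1) with hkK | hkK
    · by_cases htight : ∑ i ∈ Finset.Icc 1 k, Pstar i * (t i - t (i - 1))
          = ∑ j ∈ Finset.range k, E j
      · rw [htight, sub_self, mul_zero]
      · have hlt := lt_of_le_of_ne (hfeas.2 k h1 h2) htight
        have h4 := hslackl k h1 (by omega) hlt
        have h5 := hmono k h1 (by omega)
        have heq : Pstar k = Pstar (k + 1) := le_antisymm h5 h4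
        rw [hAval k h2, hAval (k + 1) (by omega), heq, sub_self, zero_mul]
    · have hk : k = K + 1 := by omega
      subst hk
      rw [hlast, sub_self, mul_zero]
  · intro i h1 h2
    beta_reduce
    have hs : ∑ k ∈ Finset.Icc i (K + 1), (A k - A (k + 1)) = A i := hsumA i h1 h2
    constructor
    · rw [hs]; exact hApos i h1 h2
    · rw [hs, hAval i h2]
      have hKne : K0 ≠ 0 := hK0.ne'
      have hune : (1 + K0 * Pstar i) ≠ 0 := (hden i h1 h2).ne'
      have hval : 1 / (2 * (K0 / (2 * (1 + K0 * Pstar i)))) - 1 / K0 = Pstar i := by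
        field_simp
        ring
      rw [hval, max_eq_right (hPnn i h1 h2)]
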